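/- arXiv:0805.1702 — 4 statements merged into one kernel-verified Lean document; each statement's English description precedes it below -/
import Mathlib

section
/- Let a, b, c, d be integers with a ≠ 0, b ≠ 0, and gcd(gcd(a, b), c) = 1. Set δ = gcd(a, b). Let (x₁, y₁) be integers with (a/δ)*x₁ + (b/δ)*y₁ = 1, and let (t₁, z₁) be integers with δ*t₁ + c*z₁ = d. Then a triple of integers (x, y, z) satisfies a*x + b*y + c*z = d if and only if there exist integers m, n such that x = (t₁ - c*m)*x₁ - (b/δ)*n, y = (t₁ - c*m)*y₁ + (a/δ)*n, and z = z₁ + δ*m. -/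
/-!
Since `a * x + b * y = δ * T` with `T = (a/δ) * x + (b/δ) * y`, the equation reads `δ * T + c * z = d`.
The parametrisation of a two-variable equation with coprime coefficients is applied twice:
first to `(T, z)` with coefficients `δ, c`, then to `(x, y)` with coefficients `a/δ, b/δ`.
-/

theorem IsCoprime.mul_add_mul_eq_iff {R : Type*} [CommRing R] {p q x₀ y₀ d : R}
    (hpq : IsCoprime p q) (h₀ : p * x₀ + q * y₀ = d) (x y : R) :
    p * x + q * y = d ↔ ∃ n, x = x₀ - q * n ∧ y = y₀ + p * n := by
  obtain ⟨u, v, huv⟩ := hpq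
  constructor
  · intro h
    -- `u * p + v * q = 1` gives the parameter explicitly, instead of dividing by `p` or `q`
    refine ⟨u * (y - y₀) - v * (x - x₀), ?_, ?_⟩
    · linear_combination -(x - x₀) * huv + u * (h - h₀)
    · linear_combination -(y - y₀) * huv + v * (h - h₀)
  · rintro ⟨n, rfl, rfl⟩
    linear_combination h₀

theorem formula3_general (a b c d : ℤ)
    (habc : Int.gcd (Int.gcd a b : ℤ) c = 1)
    (x₁ y₁ t₁ z₁ : ℤ)
    (h₁ : (a / (Int.gcd a b : ℤ)) * x₁ + (b / (Int.gcd a b : ℤ)) * y₁ = 1)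
    (h₂ : (Int.gcd a b : ℤ) * t₁ + c * z₁ = d) (x y z : ℤ) :
    a * x + b * y + c * z = d ↔
      ∃ m n : ℤ,
        x = (t₁ - c * m) * x₁ - (b / (Int.gcd a b : ℤ)) * n ∧
        y = (t₁ - c * m) * y₁ + (a / (Int.gcd a b : ℤ)) * n ∧
        z = z₁ + (Int.gcd a b : ℤ) * m := by
  set δ : ℤ := (Int.gcd a b : ℤ)
  have hsplit : a * x + b * y + c * z = δ * (a / δ * x + b / δ * y) + c * z := by
    rw [mul_add, ← mul_assoc, ← mul_assoc, Int.mul_ediv_cancel' (Int.gcd_dvd_left a b),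
      Int.mul_ediv_cancel' (Int.gcd_dvd_right a b)]
  have hδc : IsCoprime δ c := Int.isCoprime_iff_gcd_eq_one.mpr habc
  have hab : IsCoprime (a / δ) (b / δ) := ⟨x₁, y₁, by linear_combination h₁⟩
  rw [hsplit, hδc.mul_add_mul_eq_iff h₂]
  refine exists_congr fun m => ?_
  have hT : a / δ * ((t₁ - c * m) * x₁) + b / δ * ((t₁ - c * m) * y₁) = t₁ - c * m := by
    linear_combination (t₁ - c * m) * h₁
  rw [hab.mul_add_mul_eq_iff hT, ← exists_and_right]
  simp only [and_assoc]

theorem formula3 (a b c d : ℤ) (ha : a ≠ 0) (hb : b ≠ 0)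
    (habc : Int.gcd (Int.gcd a b : ℤ) c = 1)
    (x₁ y₁ t₁ z₁ : ℤ)
    (h₁ : (a / (Int.gcd a b : ℤ)) * x₁ + (b / (Int.gcd a b : ℤ)) * y₁ = 1)
    (h₂ : (Int.gcd a b : ℤ) * t₁ + c * z₁ = d) (x y z : ℤ) :
    a * x + b * y + c * z = d ↔
      ∃ m n : ℤ,
        x = (t₁ - c * m) * x₁ - (b / (Int.gcd a b : ℤ)) * n ∧
        y = (t₁ - c * m) * y₁ + (a / (Int.gcd a b : ℤ)) * n ∧
        z = z₁ + (Int.gcd a b : ℤ) * m :=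
  formula3_general a b c d habc x₁ y₁ t₁ z₁ h₁ h₂ x y z
end

section
/- Let a₁, b₁, c₁, d₁, a₂, b₂, c₂, d₂ be integers with c₁ ≠ 0. Set D₁ = a₁*b₂ - a₂*b₁, D₂ = b₁*c₂ - b₂*c₁, D₃ = a₁*c₂ - a₂*c₁, D = d₁*c₂ - d₂*c₁, and assume D₂ and D₃ are not both zero. Let D₂₃ = gcd(D₂, D₃) and δ = gcd(c₁*D₁/D₂₃, c₁). If (x₁, y₁) and (x₂, y₂) are two pairs of integers each satisfying D₃*x + D₂*y = D, then δ divides (d₁ - a₁*x₁ - b₁*y₁) - (d₁ - a₁*x₂ - b₁*y₂); hence δ divides d₁ - a₁*x₁ - b₁*y₁ if and only if δ divides d₁ - a₁*x₂ - b₁*y₂. -/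
/-!
Since `c₁ * D₁ = b₁ * D₃ - a₁ * D₂`, the quotient `c₁ * D₁ / D₂₃` equals `b₁ * q - a₁ * p` where
`D₂ = D₂₃ * p`, `D₃ = D₂₃ * q` with `p`, `q` coprime. The difference `(u, v)` of two solutions
satisfies `q * u + p * v = 0`, hence `(u, v) = t • (p, -q)`, and the difference of the two values
of `d₁ - a₁ * x - b₁ * y` is a multiple of `b₁ * q - a₁ * p`, so even of `c₁ * D₁ / D₂₃`.
-/

theorem IsCoprime.sub_mul_dvd_of_mul_add_mul_eq_zero {R : Type*} [CommRing R] {p q u v : R}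
    (hpq : IsCoprime p q) (huv : q * u + p * v = 0) (a b : R) :
    b * q - a * p ∣ a * u + b * v := by
  obtain ⟨r, s, hrs⟩ := hpq
  -- `(u, v) = t • (p, -q)` with `t = s * v - r * u`, read off from `r * p + s * q = 1`
  exact ⟨s * v - r * u, by linear_combination (a * s + b * r) * huv - (a * u + b * v) * hrs⟩

theorem Int.sub_mul_div_gcd_dvd_of_mul_add_mul_eq_zero {m n u v : ℤ} (hmn : ¬(m = 0 ∧ n = 0))
    (huv : n * u + m * v = 0) (a b : ℤ) :
    (b * n - a * m) / (m.gcd n : ℤ) ∣ a * u + b * v := by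
  set g : ℤ := (m.gcd n : ℤ)
  have hg : g ≠ 0 := Int.natCast_ne_zero.mpr (mt Int.gcd_eq_zero_iff.mp hmn)
  have hm : m / g * g = m := Int.ediv_mul_cancel (Int.gcd_dvd_left m n)
  have hn : n / g * g = n := Int.ediv_mul_cancel (Int.gcd_dvd_right m n)
  have hcop : IsCoprime (m / g) (n / g) := by
    have := isCoprime_div_gcd_div_gcd_of_gcd_ne_zero (p := m) (q := n) (by rwa [← Int.coe_gcd])
    rwa [← Int.coe_gcd] at this
  have hquot : (b * n - a * m) / g = b * (n / g) - a * (m / g) :=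
    Int.ediv_eq_of_eq_mul_left hg (by linear_combination a * hm - b * hn)
  have hker : n / g * u + m / g * v = 0 := by
    refine (mul_eq_zero.mp ?_).resolve_left hg
    linear_combination huv + u * hn + v * hm
  rw [hquot]
  exact hcop.sub_mul_dvd_of_mul_add_mul_eq_zero hker a b

theorem condition2_well_defined_general (a₁ b₁ c₁ d₁ a₂ b₂ c₂ : ℤ)
    (D₁ D₂ D₃ D : ℤ)
    (hD₁ : D₁ = a₁ * b₂ - a₂ * b₁) (hD₂ : D₂ = b₁ * c₂ - b₂ * c₁)
    (hD₃ : D₃ = a₁ * c₂ - a₂ * c₁)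
    (hnz : ¬ (D₂ = 0 ∧ D₃ = 0))
    (D₂₃ δ : ℤ) (hD₂₃ : D₂₃ = (Int.gcd D₂ D₃ : ℤ))
    (hδ : δ = (Int.gcd (c₁ * D₁ / D₂₃) c₁ : ℤ))
    (x₁ y₁ x₂ y₂ : ℤ)
    (h₁ : D₃ * x₁ + D₂ * y₁ = D) (h₂ : D₃ * x₂ + D₂ * y₂ = D) :
    δ ∣ ((d₁ - a₁ * x₁ - b₁ * y₁) - (d₁ - a₁ * x₂ - b₁ * y₂)) ∧
      (δ ∣ (d₁ - a₁ * x₁ - b₁ * y₁) ↔ δ ∣ (d₁ - a₁ * x₂ - b₁ * y₂)) := by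
  have hcD₁ : c₁ * D₁ = b₁ * D₃ - a₁ * D₂ := by subst hD₁ hD₂ hD₃; ring
  have hδ_dvd : δ ∣ c₁ * D₁ / D₂₃ := hδ ▸ Int.gcd_dvd_left _ _
  have hquot_dvd : c₁ * D₁ / D₂₃ ∣ a₁ * (x₂ - x₁) + b₁ * (y₂ - y₁) := by
    rw [hcD₁, hD₂₃]
    exact Int.sub_mul_div_gcd_dvd_of_mul_add_mul_eq_zero hnz (by linear_combination h₂ - h₁) a₁ b₁
  have hdiff : δ ∣ (d₁ - a₁ * x₁ - b₁ * y₁) - (d₁ - a₁ * x₂ - b₁ * y₂) := by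
    rw [show (d₁ - a₁ * x₁ - b₁ * y₁) - (d₁ - a₁ * x₂ - b₁ * y₂)
        = a₁ * (x₂ - x₁) + b₁ * (y₂ - y₁) by ring]
    exact hδ_dvd.trans hquot_dvd
  exact ⟨hdiff, dvd_iff_dvd_of_dvd_sub hdiff⟩

theorem condition2_well_defined (a₁ b₁ c₁ d₁ a₂ b₂ c₂ d₂ : ℤ) (hc₁ : c₁ ≠ 0)
    (D₁ D₂ D₃ D : ℤ)
    (hD₁ : D₁ = a₁ * b₂ - a₂ * b₁) (hD₂ : D₂ = b₁ * c₂ - b₂ * c₁)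
    (hD₃ : D₃ = a₁ * c₂ - a₂ * c₁) (hD : D = d₁ * c₂ - d₂ * c₁)
    (hnz : ¬ (D₂ = 0 ∧ D₃ = 0))
    (D₂₃ δ : ℤ) (hD₂₃ : D₂₃ = (Int.gcd D₂ D₃ : ℤ))
    (hδ : δ = (Int.gcd (c₁ * D₁ / D₂₃) c₁ : ℤ))
    (x₁ y₁ x₂ y₂ : ℤ)
    (h₁ : D₃ * x₁ + D₂ * y₁ = D) (h₂ : D₃ * x₂ + D₂ * y₂ = D) :
    δ ∣ ((d₁ - a₁ * x₁ - b₁ * y₁) - (d₁ - a₁ * x₂ - b₁ * y₂)) ∧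
      (δ ∣ (d₁ - a₁ * x₁ - b₁ * y₁) ↔ δ ∣ (d₁ - a₁ * x₂ - b₁ * y₂)) :=
  condition2_well_defined_general a₁ b₁ c₁ d₁ a₂ b₂ c₂ D₁ D₂ D₃ D hD₁ hD₂ hD₃ hnz D₂₃ δ hD₂₃ hδ x₁
    y₁ x₂ y₂ h₁ h₂
end

section
/- Let a₁, b₁, c₁, d₁, a₂, b₂, c₂, d₂ be integers with c₁ ≠ 0. Set D₁ = a₁*b₂ - a₂*b₁, D₂ = b₁*c₂ - b₂*c₁, D₃ = a₁*c₂ - a₂*c₁, D = d₁*c₂ - d₂*c₁, and assume D₂ and D₃ are not both zero. Let D₂₃ = gcd(D₂, D₃) and δ = gcd(c₁*D₁/D₂₃, c₁). Suppose (x₁, y₁) are integers with D₃*x₁ + D₂*y₁ = D, and (m₁, z₁) are integers with (c₁*D₁/D₂₃)*m₁ + c₁*z₁ = d₁ - a₁*x₁ - b₁*y₁. Then a triple of integers (x, y, z) satisfies both a₁*x + b₁*y + c₁*z = d₁ and a₂*x + b₂*y + c₂*z = d₂ if and only if there exists an integer λ such that x = x₁ - (D₂/D₂₃)*(m₁ -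 (c₁/δ)*λ), y = y₁ + (D₃/D₂₃)*(m₁ - (c₁/δ)*λ), and z = z₁ + ((c₁*D₁/D₂₃)/δ)*λ. -/
/-!
Eliminating `z` turns the system into the first equation together with the two-variable
equation `D₃ x + D₂ y = D`, whose solutions are `(x₁ - (D₂/D₂₃) m, y₁ + (D₃/D₂₃) m)`.
Substituting these into the first equation, and using `c₁ D₁ = -a₁ D₂ + b₁ D₃`, leaves the
two-variable equation `(c₁ D₁/D₂₃) m + c₁ z = (c₁ D₁/D₂₃) m₁ + c₁ z₁` in `(m, z)`, solved the
same way with the parameter `λ`.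
-/

theorem IsCoprime.mul_add_mul_eq_zero_iff {R : Type*} [CommRing R] {p q u v : R}
    (h : IsCoprime p q) : p * u + q * v = 0 ↔ ∃ k, u = -(q * k) ∧ v = p * k := by
  constructor
  · intro huv
    obtain ⟨a, b, hab⟩ := h
    refine ⟨a * v - b * u, ?_, ?_⟩
    · linear_combination (-u) * hab + a * huv
    · linear_combination (-v) * hab + b * huv
  · rintro ⟨k, rfl, rfl⟩
    ring

theorem Int.mul_add_mul_eq_iff_exists {p q u₀ v₀ u v : ℤ} (hpq : p ≠ 0 ∨ q ≠ 0) :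
    p * u + q * v = p * u₀ + q * v₀ ↔
      ∃ k, u = u₀ - q / p.gcd q * k ∧ v = v₀ + p / p.gcd q * k := by
  have hg : 0 < p.gcd q := Int.gcd_pos_iff.mpr hpq
  have hg₀ : (p.gcd q : ℤ) ≠ 0 := by exact_mod_cast hg.ne'
  have hp : p = p.gcd q * (p / p.gcd q) := (Int.mul_ediv_cancel' (Int.gcd_dvd_left p q)).symm
  have hq : q = p.gcd q * (q / p.gcd q) := (Int.mul_ediv_cancel' (Int.gcd_dvd_right p q)).symm
  have hcop : IsCoprime (p / p.gcd q) (q / p.gcd q) :=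
    Int.isCoprime_iff_gcd_eq_one.mpr (Int.gcd_div_gcd_div_gcd hg)
  calc p * u + q * v = p * u₀ + q * v₀
      ↔ p / p.gcd q * (u - u₀) + q / p.gcd q * (v - v₀) = 0 := by
        constructor <;> intro h
        · apply mul_left_cancel₀ hg₀
          linear_combination h - (u - u₀) * hp - (v - v₀) * hq
        · linear_combination (p.gcd q : ℤ) * h + (u - u₀) * hp + (v - v₀) * hq
    _ ↔ ∃ k, u = u₀ - q / p.gcd q * k ∧ v = v₀ + p / p.gcd q * k := by
        simp only [hcop.mul_add_mul_eq_zero_iff, sub_eq_iff_eq_add, neg_add_eq_sub, add_comm v₀]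

theorem linear_system_iff_elim_third_var {R : Type*} [CommRing R] [NoZeroDivisors R]
    {a₁ b₁ c₁ d₁ a₂ b₂ c₂ d₂ x y z : R} (hc₁ : c₁ ≠ 0) :
    (a₁ * x + b₁ * y + c₁ * z = d₁ ∧ a₂ * x + b₂ * y + c₂ * z = d₂) ↔
      (a₁ * x + b₁ * y + c₁ * z = d₁ ∧
        (a₁ * c₂ - a₂ * c₁) * x + (b₁ * c₂ - b₂ * c₁) * y = d₁ * c₂ - d₂ * c₁) := by
  refine and_congr_right fun h₁ => ⟨fun h₂ => ?_, fun h => mul_left_cancel₀ hc₁ ?_⟩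
  · linear_combination c₂ * h₁ - c₁ * h₂
  · linear_combination c₂ * h₁ - h

theorem formula4_part_ii (a₁ b₁ c₁ d₁ a₂ b₂ c₂ d₂ : ℤ) (hc₁ : c₁ ≠ 0)
    (D₁ D₂ D₃ D : ℤ)
    (hD₁ : D₁ = a₁ * b₂ - a₂ * b₁) (hD₂ : D₂ = b₁ * c₂ - b₂ * c₁)
    (hD₃ : D₃ = a₁ * c₂ - a₂ * c₁) (hD : D = d₁ * c₂ - d₂ * c₁)
    (hnz : ¬ (D₂ = 0 ∧ D₃ = 0))
    (D₂₃ δ : ℤ) (hD₂₃ : D₂₃ = (Int.gcd D₂ D₃ : ℤ))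
    (hδ : δ = (Int.gcd (c₁ * D₁ / D₂₃) c₁ : ℤ))
    (x₁ y₁ m₁ z₁ : ℤ)
    (hxy : D₃ * x₁ + D₂ * y₁ = D)
    (hmz : (c₁ * D₁ / D₂₃) * m₁ + c₁ * z₁ = d₁ - a₁ * x₁ - b₁ * y₁)
    (x y z : ℤ) :
    (a₁ * x + b₁ * y + c₁ * z = d₁ ∧ a₂ * x + b₂ * y + c₂ * z = d₂) ↔
      ∃ lam : ℤ,
        x = x₁ - (D₂ / D₂₃) * (m₁ - (c₁ / δ) * lam) ∧
        y = y₁ + (D₃ / D₂₃) * (m₁ - (c₁ / δ) * lam) ∧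
        z = z₁ + ((c₁ * D₁ / D₂₃) / δ) * lam := by
  have hG : c₁ * D₁ / D₂₃ = -a₁ * (D₂ / D₂₃) + b₁ * (D₃ / D₂₃) := by
    have h₂ : D₂₃ ∣ D₂ := hD₂₃ ▸ Int.gcd_dvd_left D₂ D₃
    have h₃ : D₂₃ ∣ D₃ := hD₂₃ ▸ Int.gcd_dvd_right D₂ D₃
    rw [show c₁ * D₁ = -a₁ * D₂ + b₁ * D₃ by subst hD₁ hD₂ hD₃; ring,
      Int.add_ediv_of_dvd_left (h₂.mul_left _), Int.mul_ediv_assoc _ h₂, Int.mul_ediv_assoc _ h₃]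
  have first_eq_iff (m : ℤ) : a₁ * (x₁ - D₂ / D₂₃ * m) + b₁ * (y₁ + D₃ / D₂₃ * m) + c₁ * z = d₁ ↔
      c₁ * D₁ / D₂₃ * m + c₁ * z = c₁ * D₁ / D₂₃ * m₁ + c₁ * z₁ := by
    rw [hG] at hmz ⊢
    constructor <;> intro h
    · linear_combination h - hmz
    · linear_combination h + hmz
  have mz_sol (m : ℤ) := Int.mul_add_mul_eq_iff_exists (p := c₁ * D₁ / D₂₃) (q := c₁)
    (u := m) (v := z) (u₀ := m₁) (v₀ := z₁) (.inr hc₁)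
  rw [linear_system_iff_elim_third_var hc₁, ← hD₃, ← hD₂, ← hD, ← hxy,
    Int.mul_add_mul_eq_iff_exists (by tauto), Int.gcd_comm D₃ D₂, ← hD₂₃]
  simp only [← hδ] at mz_sol
  constructor
  · rintro ⟨h₁, m, rfl, rfl⟩
    obtain ⟨lam, rfl, rfl⟩ := (mz_sol m).1 ((first_eq_iff m).1 h₁)
    exact ⟨lam, rfl, rfl, rfl⟩
  · rintro ⟨lam, rfl, rfl, rfl⟩
    exact ⟨(first_eq_iff _).2 ((mz_sol _).2 ⟨lam, rfl, rfl⟩), _, rfl, rfl⟩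
end

section
/- Let p be a positive integer. A triple of integers (x, y, z) satisfies both x + y + z = p and 2*(5*y) = 7*x + 3*z (i.e., 7x, 5y, 3z in that order are successive terms of an arithmetic progression) if and only if there exists an integer m such that x = 9*p - 13*m, y = 3*p - 4*m, and z = -11*p + 17*m. -/
theorem example7_part_i (p : ℤ) (hp : 0 < p) (x y z : ℤ) :
    (x + y + z = p ∧ 2 * (5 * y) = 7 * x + 3 * z) ↔
      ∃ m : ℤ, x = 9 * p - 13 * m ∧ y = 3 * p - 4 * m ∧
        z = -11 * p + 17 * m := by
  constructor
  · rintro ⟨h1, h2⟩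
    exact ⟨3 * y - x, by omega, by omega, by omega⟩
  · rintro ⟨m, rfl, rfl, rfl⟩
    constructor <;> ring
end
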